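/- Let g(s) = s(1−s)² and let s₁ ∈ (0,1]. Then: (i) for every A ∈ (0,1], the infimum of g(As) over s ∈ [s₁, 1] equals min{ g(As₁), g(A) }; and (ii) the supremum over A ∈ (0,1) of (inf_{s ∈ [s₁,1]} g(As)) equals H(s₁), where H(t) = t(t + 1 + 2√t)/(t + 1 + √t)³; this supremum is attained at A₋ = 1/(s₁ + 1 + √s₁), i.e. H(s₁) = g(A₋) = inf_{s ∈ [s₁,1]} g(A₋ s). -/

import Mathlib

/-!
`g` increases on `[0, 1/3]` and decreases on `[1/3, 1]`, so on any interval `[u, v] ⊆ [0, 1]` its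
minimum is attained at an endpoint; since `s ↦ A s` maps `[s₁, 1]` onto `[A s₁, A]`, this gives (i).
As `A` grows, `g (A s₁)` increases while `A s₁ ≤ 1/3` and `g A` decreases once `A ≥ 1/3`, so the
supremum of `min (g (A s₁)) (g A)` is reached where the two values cross, which happens at
`A₋ = 1/(s₁ + 1 + √s₁)`; there the common value is `H s₁`.
-/

open Set

/-- `g(s) = s(1-s)²`. -/
noncomputable def g (s : ℝ) : ℝ := s * (1 - s) ^ 2

/-- `H(t) = t(t+1+2√t)/(t+1+√t)³`. -/
noncomputable def H (t : ℝ) : ℝ :=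
  t * (t + 1 + 2 * Real.sqrt t) / (t + 1 + Real.sqrt t) ^ 3

theorem g_monotoneOn : MonotoneOn g (Icc 0 (1 / 3)) := by
  rintro a ⟨ha, -⟩ b ⟨-, hb⟩ hab
  unfold g
  nlinarith [mul_nonneg (sub_nonneg.2 hab) (mul_nonneg (ha.trans hab) (sub_nonneg.2 hb)),
    mul_nonneg ha (sub_nonneg.2 hab), sq_nonneg (a + b - 2 / 3)]

theorem g_antitoneOn : AntitoneOn g (Icc (1 / 3) 1) := by
  rintro a ⟨ha, -⟩ b ⟨-, hb⟩ hab
  unfold g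
  nlinarith [mul_nonneg (sub_nonneg.2 hab) (mul_nonneg (sub_nonneg.2 (ha.trans hab))
    (sub_nonneg.2 hb)), mul_nonneg (sub_nonneg.2 ha) (sub_nonneg.2 hab),
    mul_nonneg (sub_nonneg.2 hab) (sub_nonneg.2 hb), sq_nonneg (a + b - 4 / 3)]

theorem min_g_le_g {u v x : ℝ} (hu : 0 ≤ u) (hux : u ≤ x) (hxv : x ≤ v) (hv : v ≤ 1) :
    min (g u) (g v) ≤ g x := by
  rcases le_total x (1 / 3) with hx | hx
  · exact (min_le_left _ _).trans <| g_monotoneOn ⟨hu, hux.trans hx⟩ ⟨hu.trans hux, hx⟩ hux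
  · exact (min_le_right _ _).trans <| g_antitoneOn ⟨hx, hxv.trans hv⟩ ⟨hx.trans hxv, hv⟩ hxv

theorem isLeast_g_image_Icc {u v : ℝ} (hu : 0 ≤ u) (huv : u ≤ v) (hv : v ≤ 1) :
    IsLeast (g '' Icc u v) (min (g u) (g v)) := by
  refine ⟨?_, ?_⟩
  · rcases min_choice (g u) (g v) with h | h <;> rw [h]
    exacts [mem_image_of_mem g (left_mem_Icc.2 huv), mem_image_of_mem g (right_mem_Icc.2 huv)]
  · rintro _ ⟨x, ⟨hux, hxv⟩, rfl⟩
    exact min_g_le_g hu hux hxv hv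

theorem sInf_g_mul_image_Icc {A s₁ : ℝ} (hA₀ : 0 ≤ A) (hA₁ : A ≤ 1) (hs₀ : 0 ≤ s₁)
    (hs₁ : s₁ ≤ 1) : sInf ((fun s => g (A * s)) '' Icc s₁ 1) = min (g (A * s₁)) (g A) := by
  have himage : (fun s => g (A * s)) '' Icc s₁ 1 = g '' Icc (A * s₁) A := by
    rw [← image_image g (A * ·), image_mul_left_Icc hA₀ hs₁, mul_one]
  have hAs : A * s₁ ≤ A := by simpa using mul_le_mul_of_nonneg_left hs₁ hA₀
  rw [himage]
  exact (isLeast_g_image_Icc (mul_nonneg hA₀ hs₀) hAs hA₁).csInf_eq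

/-- The value `A₋` of `A` at which `g (A s) = g A`: with `t = √s` this equation reads
`t (1 - A t²) = 1 - A`, i.e. `A = (1 - t)/(1 - t³) = 1/(1 + t + t²)`. -/
noncomputable def aMinus (s : ℝ) : ℝ := 1 / (s + 1 + Real.sqrt s)

section aMinus

variable {s : ℝ}

theorem aMinus_mem_Ioo (hs₀ : 0 < s) : aMinus s ∈ Ioo 0 1 := by
  have ht : 0 < Real.sqrt s := Real.sqrt_pos.2 hs₀
  refine ⟨by unfold aMinus; positivity, ?_⟩
  rw [aMinus, div_lt_one (by positivity)]
  linarith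

theorem one_third_le_aMinus (hs₀ : 0 ≤ s) (hs₁ : s ≤ 1) : 1 / 3 ≤ aMinus s := by
  have ht : Real.sqrt s ≤ 1 := Real.sqrt_le_one.2 hs₁
  rw [aMinus, div_le_div_iff₀ (by norm_num) (by positivity)]
  linarith

theorem aMinus_mul_le_one_third (hs₀ : 0 ≤ s) (hs₁ : s ≤ 1) : aMinus s * s ≤ 1 / 3 := by
  have ht : s ≤ Real.sqrt s := Real.le_sqrt_of_sq_le (by nlinarith)
  rw [aMinus, one_div, inv_mul_eq_div, div_le_div_iff₀ (by positivity) (by norm_num)]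
  linarith

theorem g_aMinus_mul (hs₀ : 0 ≤ s) : g (aMinus s * s) = g (aMinus s) := by
  obtain ⟨t, ht, rfl⟩ : ∃ t, 0 ≤ t ∧ s = t ^ 2 := ⟨_, Real.sqrt_nonneg s, (Real.sq_sqrt hs₀).symm⟩
  have hD : t ^ 2 + 1 + t ≠ 0 := by positivity
  rw [g, g, aMinus, Real.sqrt_sq ht]
  field_simp
  ring

theorem H_eq_g_aMinus (hs₀ : 0 ≤ s) : H s = g (aMinus s) := by
  obtain ⟨t, ht, rfl⟩ : ∃ t, 0 ≤ t ∧ s = t ^ 2 := ⟨_, Real.sqrt_nonneg s, (Real.sq_sqrt hs₀).symm⟩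
  have hD : t ^ 2 + 1 + t ≠ 0 := by positivity
  rw [H, g, aMinus, Real.sqrt_sq ht]
  field_simp
  ring

theorem isGreatest_min_g_image_Ioo (hs₀ : 0 < s) (hs₁ : s ≤ 1) :
    IsGreatest ((fun A => min (g (A * s)) (g A)) '' Ioo 0 1) (g (aMinus s)) := by
  refine ⟨⟨aMinus s, aMinus_mem_Ioo hs₀, by simp only [g_aMinus_mul hs₀.le, min_self]⟩, ?_⟩
  rintro _ ⟨A, ⟨hA₀, hA₁⟩, rfl⟩
  have hAm := aMinus_mem_Ioo hs₀
  have hthird := one_third_le_aMinus hs₀.le hs₁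
  rcases le_total A (aMinus s) with hA | hA
  · have hAs : A * s ≤ aMinus s * s := mul_le_mul_of_nonneg_right hA hs₀.le
    have hAms := aMinus_mul_le_one_third hs₀.le hs₁
    rw [← g_aMinus_mul hs₀.le]
    exact (min_le_left _ _).trans <| g_monotoneOn ⟨by positivity, hAs.trans hAms⟩
      ⟨by positivity, hAms⟩ hAs
  · exact (min_le_right _ _).trans <| g_antitoneOn ⟨hthird, hAm.2.le⟩
      ⟨hthird.trans hA, hA₁.le⟩ hA

end aMinus

theorem sup_inf_g (s₁ : ℝ) (hs₁ : s₁ ∈ Set.Ioc (0 : ℝ) 1) :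
    (∀ A ∈ Set.Ioc (0 : ℝ) 1,
      sInf ((fun s => g (A * s)) '' Set.Icc s₁ 1) = min (g (A * s₁)) (g A)) ∧
    sSup ((fun A => sInf ((fun s => g (A * s)) '' Set.Icc s₁ 1)) '' Set.Ioo (0 : ℝ) 1)
      = H s₁ ∧
    (1 / (s₁ + 1 + Real.sqrt s₁)) ∈ Set.Ioo (0 : ℝ) 1 ∧
    H s₁ = g (1 / (s₁ + 1 + Real.sqrt s₁)) ∧
    H s₁ = sInf ((fun s => g ((1 / (s₁ + 1 + Real.sqrt s₁)) * s)) '' Set.Icc s₁ 1) := by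
  obtain ⟨hs₀, hs₁⟩ := hs₁
  have hinf : ∀ A ∈ Ioc (0 : ℝ) 1,
      sInf ((fun s => g (A * s)) '' Icc s₁ 1) = min (g (A * s₁)) (g A) :=
    fun A hA => sInf_g_mul_image_Icc hA.1.le hA.2 hs₀.le hs₁
  have hAm := aMinus_mem_Ioo hs₀
  refine ⟨hinf, ?_, hAm, H_eq_g_aMinus hs₀.le, ?_⟩
  · rw [image_congr fun A hA => hinf A ⟨hA.1, hA.2.le⟩,
      (isGreatest_min_g_image_Ioo hs₀ hs₁).csSup_eq, H_eq_g_aMinus hs₀.le]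
  · change H s₁ = sInf ((fun s => g (aMinus s₁ * s)) '' Icc s₁ 1)
    rw [hinf _ ⟨hAm.1, hAm.2.le⟩, g_aMinus_mul hs₀.le, min_self, H_eq_g_aMinus hs₀.le]
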